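/- Let (H,X) be a conjunctive query. There exists a positive integer ℓ such that the treewidth of the extension graph Γ(H,X) is at most the treewidth of F_ℓ(H,X). In fact any ℓ > |V(H)| + 1 works. -/

import Mathlib

/-!
Once `ℓ ≥ |V(H)| + 1`, the extension `Γ(H,X)` is a minor of `F_ℓ(H,X)`: fix an injection
`e : Option V ↪ Fin ℓ`; a vertex `x ∈ X` becomes the branch set consisting of `x` and of its
private copy `e (some x)` of the components of `H[V(H)∖X]` adjacent to `x`, and a vertex outside
`X` becomes its clone in the spare copy `e none`. Two vertices of `X` attached to a common
component are then joined by an edge between their branch sets. Treewidth does not increase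
under taking minors: the preimages of the bags of a tree decomposition under the branch sets form
a tree decomposition of the minor, and disjointness of the branch sets keeps them no larger.
-/

/-- The canonical map `γ` from the vertices of the `ℓ`-copy `F_ℓ(H,X)` to the
vertices of `H`: each `x ∈ X` goes to itself, and each clone `(y,i)` goes to `y`. -/
def gammaMap {V : Type*} (X : Set V) (ℓ : ℕ) :
    (↥X ⊕ (↥(Xᶜ) × Fin ℓ)) → V
  | Sum.inl x => ↑x
  | Sum.inr (y, _) => ↑y

/-- The copy index of a vertex of `F_ℓ(H,X)` (if any). -/
def copyIdx {V : Type*} (X : Set V) (ℓ : ℕ) :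
    (↥X ⊕ (↥(Xᶜ) × Fin ℓ)) → Option (Fin ℓ)
  | Sum.inl _ => none
  | Sum.inr (_, i) => some i

/-- The `ℓ`-copy `F_ℓ(H,X)`: vertex set `X ∪ ((V(H)∖X) × [ℓ])`; two vertices are
adjacent iff their `γ`-images are adjacent in `H` and, when both lie in the cloned
part, their copy indices coincide.  (Edges within `X`, edges `{u,(v,i)}` for all
indices `i`, and edges `{(u,i),(v,i)}` within each copy.) -/
def copyGraph {V : Type*} (H : SimpleGraph V) (X : Set V) (ℓ : ℕ) :
    SimpleGraph (↥X ⊕ (↥(Xᶜ) × Fin ℓ)) where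
  Adj a b := H.Adj (gammaMap X ℓ a) (gammaMap X ℓ b) ∧
    ∀ i j, copyIdx X ℓ a = some i → copyIdx X ℓ b = some j → i = j
  symm := by
    refine ⟨?_⟩
    intro a b h
    exact ⟨h.1.symm, fun i j hi hj => (h.2 j i hj hi).symm⟩
  loopless := by
    refine ⟨?_⟩
    intro a h
    exact H.ne_of_adj h.1 rfl

/-- A tree decomposition of a simple graph `G`. -/
structure TreeDecomp {V : Type*} (G : SimpleGraph V) where
  /-- the index type of the decomposition tree -/
  ι : Type
  /-- the decomposition tree -/
  T : SimpleGraph ι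
  /-- `T` is a tree -/
  tree : T.IsTree
  /-- the bags -/
  bag : ι → Set V
  /-- (T1) every vertex occurs in some bag -/
  covers_vertex : ∀ v : V, ∃ t, v ∈ bag t
  /-- (T3) every edge is contained in some bag -/
  covers_edge : ∀ ⦃u v : V⦄, G.Adj u v → ∃ t, u ∈ bag t ∧ v ∈ bag t
  /-- (T2) for every vertex the set of bags containing it induces a connected subtree -/
  bags_connected : ∀ v : V, (T.induce {t | v ∈ bag t}).Connected

/-- `G` has a tree decomposition of width at most `k`. -/
def TreewidthAtMost {V : Type*} (G : SimpleGraph V) (k : ℕ) : Prop :=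
  ∃ D : TreeDecomp G, ∀ t, (D.bag t).ncard ≤ k + 1

/-- The treewidth of a (finite) simple graph: the least `k` such that `G` has a
tree decomposition of width `k`. -/
noncomputable def treewidth {V : Type*} (G : SimpleGraph V) : ℕ :=
  sInf {k | TreewidthAtMost G k}

/-- The extension `Γ(H,X)` of a conjunctive query `(H,X)`: the graph on `V(H)` whose
edges are those of `H` together with all pairs `{u,v}` of distinct vertices of `X`
such that some connected component of the induced subgraph `H[V(H)∖X]` is adjacent in
`H` to both `u` and `v`. -/
def extGraph {V : Type*} (H : SimpleGraph V) (X : Set V) : SimpleGraph V where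
  Adj u v := H.Adj u v ∨ (u ≠ v ∧ u ∈ X ∧ v ∈ X ∧
    ∃ (w₁ w₂ : ↥(Xᶜ)), H.Adj u ↑w₁ ∧ H.Adj v ↑w₂ ∧ (H.induce Xᶜ).Reachable w₁ w₂)
  symm := by
    refine ⟨?_⟩
    intro u v h
    rcases h with h | ⟨hne, hu, hv, w₁, w₂, h1, h2, h3⟩
    · exact Or.inl h.symm
    · exact Or.inr ⟨hne.symm, hv, hu, w₂, w₁, h2, h1, h3.symm⟩
  loopless := by
    refine ⟨?_⟩
    intro u h
    rcases h with h | ⟨hne, _⟩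
    · exact H.ne_of_adj h rfl
    · exact hne rfl

open SimpleGraph

namespace SimpleGraph

variable {V W ι : Type*} {G : SimpleGraph V}

theorem induce_iUnion_connected {K : SimpleGraph ι} (hK : K.Connected) {A : ι → Set V}
    (hA : ∀ i, (G.induce (A i)).Connected)
    (hA_adj : ∀ ⦃i j⦄, K.Adj i j → (A i ∩ A j).Nonempty) :
    (G.induce (⋃ i, A i)).Connected := by
  have reach_within : ∀ i {u v} (hu : u ∈ A i) (hv : v ∈ A i),
      (G.induce (⋃ i, A i)).Reachable ⟨u, Set.mem_iUnion_of_mem i hu⟩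
        ⟨v, Set.mem_iUnion_of_mem i hv⟩ := fun i u v hu hv =>
    ((hA i).preconnected ⟨u, hu⟩ ⟨v, hv⟩).map
      (G.induceHomOfLE (Set.subset_iUnion A i)).toHom
  have reach_along : ∀ {i j} (_ : K.Walk i j) {u v} (hu : u ∈ A i) (hv : v ∈ A j),
      (G.induce (⋃ i, A i)).Reachable ⟨u, Set.mem_iUnion_of_mem i hu⟩
        ⟨v, Set.mem_iUnion_of_mem j hv⟩ := by
    intro i j p
    induction p with
    | nil => exact reach_within _
    | cons hadj _ ih =>
      intro u v hu hv
      obtain ⟨w, hwi, hwj⟩ := hA_adj hadj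
      exact (reach_within _ hu hwi).trans (ih hwj hv)
  obtain ⟨i₀⟩ := hK.nonempty
  obtain ⟨⟨u₀, hu₀⟩⟩ := (hA i₀).nonempty
  rw [connected_iff_exists_forall_reachable]
  refine ⟨⟨u₀, Set.mem_iUnion_of_mem i₀ hu₀⟩, fun ⟨v, hv⟩ => ?_⟩
  obtain ⟨j, hj⟩ := Set.mem_iUnion.1 hv
  exact reach_along (hK.preconnected i₀ j).some hu₀ hj

structure MinorModel (G : SimpleGraph V) (G' : SimpleGraph W) where
  branch : V → Set W
  connected_induce_branch : ∀ v, (G'.induce (branch v)).Connected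
  pairwise_disjoint_branch : Pairwise fun u v => Disjoint (branch u) (branch v)
  exists_adj_of_adj :
    ∀ ⦃u v⦄, G.Adj u v → ∃ x ∈ branch u, ∃ y ∈ branch v, G'.Adj x y

end SimpleGraph

namespace TreeDecomp

variable {V W : Type*} {G : SimpleGraph V} {G' : SimpleGraph W}

theorem connected_induce_bags_meeting (D : TreeDecomp G') {S : Set W}
    (hS : (G'.induce S).Connected) :
    (D.T.induce {t | ∃ x ∈ S, x ∈ D.bag t}).Connected := by
  have hbags : {t | ∃ x ∈ S, x ∈ D.bag t} = ⋃ x : S, {t | x.1 ∈ D.bag t} := by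
    ext t
    simp
  rw [hbags]
  exact induce_iUnion_connected hS (fun x => D.bags_connected x)
    (fun _ _ hxy => D.covers_edge hxy)

def comap (D : TreeDecomp G') (M : G.MinorModel G') : TreeDecomp G where
  ι := D.ι
  T := D.T
  tree := D.tree
  bag t := {v | ∃ x ∈ M.branch v, x ∈ D.bag t}
  covers_vertex v := by
    obtain ⟨⟨x, hx⟩⟩ := (M.connected_induce_branch v).nonempty
    obtain ⟨t, ht⟩ := D.covers_vertex x
    exact ⟨t, x, hx, ht⟩
  covers_edge u v huv := by
    obtain ⟨x, hx, y, hy, hxy⟩ := M.exists_adj_of_adj huv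
    obtain ⟨t, hxt, hyt⟩ := D.covers_edge hxy
    exact ⟨t, ⟨x, hx, hxt⟩, ⟨y, hy, hyt⟩⟩
  bags_connected v := D.connected_induce_bags_meeting (M.connected_induce_branch v)

theorem ncard_comap_bag_le [Finite W] (D : TreeDecomp G') (M : G.MinorModel G') (t : D.ι) :
    ((D.comap M).bag t).ncard ≤ (D.bag t).ncard := by
  rcases ((D.comap M).bag t).eq_empty_or_nonempty with hempty | ⟨_, x, -⟩
  · simp [hempty]
  have : Nonempty W := ⟨x⟩
  choose! f hf using fun v (hv : v ∈ (D.comap M).bag t) => hv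
  refine Set.ncard_le_ncard_of_injOn f (fun v hv => (hf v hv).2) fun u hu v hv huv => ?_
  exact M.pairwise_disjoint_branch.eq
    (Set.not_disjoint_iff.2 ⟨f u, (hf u hu).1, huv ▸ (hf v hv).1⟩)

end TreeDecomp

section Treewidth

variable {V W : Type*} {G : SimpleGraph V} {G' : SimpleGraph W}

theorem treewidthAtMost_natCard [Finite V] (G : SimpleGraph V) :
    TreewidthAtMost G (Nat.card V) :=
  ⟨⟨Unit, ⊥, .of_subsingleton, fun _ => Set.univ, fun _ => ⟨(), trivial⟩,
      fun _ _ _ => ⟨(), trivial, trivial⟩,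
      fun _ => @Connected.of_subsingleton _ _ ⟨⟨(), trivial⟩⟩ _⟩,
    fun _ => by simp⟩

theorem TreewidthAtMost.of_minorModel [Finite W] (M : G.MinorModel G') {k : ℕ}
    (h : TreewidthAtMost G' k) : TreewidthAtMost G k :=
  let ⟨D, hD⟩ := h
  ⟨D.comap M, fun t => (D.ncard_comap_bag_le M t).trans (hD t)⟩

theorem treewidth_le_of_minorModel [Finite W] (M : G.MinorModel G') :
    treewidth G ≤ treewidth G' :=
  Nat.sInf_le <| TreewidthAtMost.of_minorModel M <|
    Nat.sInf_mem (s := {k | TreewidthAtMost G' k}) ⟨_, treewidthAtMost_natCard G'⟩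

end Treewidth

section ExtensionMinor

variable {V : Type*} (H : SimpleGraph V) (X : Set V) {ℓ : ℕ}

theorem copyGraph_adj_inl_inr {x : X} {y : ↥Xᶜ} {i : Fin ℓ} :
    (copyGraph H X ℓ).Adj (.inl x) (.inr (y, i)) ↔ H.Adj x y := by
  simp [copyGraph, gammaMap, copyIdx]

def copyHom (i : Fin ℓ) : H.induce Xᶜ →g copyGraph H X ℓ where
  toFun w := .inr (w, i)
  map_rel' h := ⟨h, by simp [copyIdx]⟩

@[simp]
theorem copyHom_apply (i : Fin ℓ) (w : ↥Xᶜ) : copyHom H X i w = .inr (w, i) :=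
  rfl

def adjacentComponents (v : V) : Set ↥Xᶜ :=
  {w | ∃ w' : ↥Xᶜ, H.Adj v w' ∧ (H.induce Xᶜ).Reachable w' w}

open Classical in
noncomputable def branchRoot (e : Option V ↪ Fin ℓ) (v : V) : X ⊕ (↥Xᶜ × Fin ℓ) :=
  if hv : v ∈ X then .inl ⟨v, hv⟩ else .inr (⟨v, hv⟩, e none)

open Classical in
noncomputable def branchSet (e : Option V ↪ Fin ℓ) (v : V) : Set (X ⊕ (↥Xᶜ × Fin ℓ)) :=
  if hv : v ∈ X then
    insert (.inl ⟨v, hv⟩) (copyHom H X (e (some v)) '' adjacentComponents H X v)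
  else {.inr (⟨v, hv⟩, e none)}

variable {H X}

theorem branchSet_of_mem (e : Option V ↪ Fin ℓ) {v : V} (hv : v ∈ X) :
    branchSet H X e v =
      insert (.inl ⟨v, hv⟩) (copyHom H X (e (some v)) '' adjacentComponents H X v) :=
  dif_pos hv

theorem branchSet_of_notMem (e : Option V ↪ Fin ℓ) {v : V} (hv : v ∉ X) :
    branchSet H X e v = {.inr (⟨v, hv⟩, e none)} :=
  dif_neg hv

theorem copyGraph_adj_branchRoot (e : Option V ↪ Fin ℓ) {u v : V} (h : H.Adj u v) :
    (copyGraph H X ℓ).Adj (branchRoot X e u) (branchRoot X e v) := by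
  unfold branchRoot
  split_ifs <;> simp [copyGraph, gammaMap, copyIdx, h]

theorem branchRoot_mem_branchSet (e : Option V ↪ Fin ℓ) (v : V) :
    branchRoot X e v ∈ branchSet H X e v := by
  unfold branchRoot branchSet
  split_ifs <;> simp

-- Distinct vertices use distinct copy indices `e (some u)`, `e (some v)`, `e none`.
theorem eq_of_mem_branchSet (e : Option V ↪ Fin ℓ) {u v : V} {x : X ⊕ (↥Xᶜ × Fin ℓ)}
    (hu : x ∈ branchSet H X e u) (hv : x ∈ branchSet H X e v) : u = v := by
  by_cases hu' : u ∈ X <;> by_cases hv' : v ∈ X <;>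
    simp [branchSet_of_mem, branchSet_of_notMem, hu', hv'] at hu hv <;> aesop

theorem connected_induce_branchSet (e : Option V ↪ Fin ℓ) (v : V) :
    ((copyGraph H X ℓ).induce (branchSet H X e v)).Connected := by
  by_cases hv : v ∈ X
  · rw [branchSet_of_mem e hv, connected_iff_exists_forall_reachable]
    refine ⟨⟨_, Set.mem_insert _ _⟩, ?_⟩
    rintro ⟨_, rfl | ⟨w, ⟨w', hvw', ⟨p⟩⟩, rfl⟩⟩
    · rfl
    · have hadj : (copyGraph H X ℓ).Adj (.inl ⟨v, hv⟩) (copyHom H X (e (some v)) w') :=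
        (copyGraph_adj_inl_inr H X).2 hvw'
      let q := (p.map (copyHom H X (e (some v)))).cons hadj
      have hq : ∀ y ∈ q.support, y ∈ insert (.inl ⟨v, hv⟩)
          (copyHom H X (e (some v)) '' adjacentComponents H X v) := by
        intro y hy
        simp only [q, Walk.support_cons, Walk.support_map, List.mem_cons, List.mem_map] at hy
        rcases hy with rfl | ⟨z, hz, rfl⟩
        · exact Set.mem_insert _ _
        · have hz' : (H.induce Xᶜ).Reachable w' z := by classical exact ⟨p.takeUntil z hz⟩
          exact Set.mem_insert_of_mem _ ⟨z, ⟨w', hvw', hz'⟩, rfl⟩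
      exact ⟨q.induce _ hq⟩
  · rw [branchSet_of_notMem e hv]
    simp

def extGraphMinorModel (e : Option V ↪ Fin ℓ) :
    (extGraph H X).MinorModel (copyGraph H X ℓ) where
  branch := branchSet H X e
  connected_induce_branch := connected_induce_branchSet e
  pairwise_disjoint_branch u v huv :=
    Set.disjoint_left.2 fun _ hu hv => huv (eq_of_mem_branchSet e hu hv)
  exists_adj_of_adj u v := by
    rintro (h | ⟨-, hu, hv, w₁, w₂, h₁, h₂, h₁₂⟩)
    · exact ⟨_, branchRoot_mem_branchSet e u, _, branchRoot_mem_branchSet e v,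
        copyGraph_adj_branchRoot e h⟩
    · refine ⟨copyHom H X (e (some u)) w₂, ?_, .inl ⟨v, hv⟩, ?_, ?_⟩
      · rw [branchSet_of_mem e hu]
        exact Set.mem_insert_of_mem _ ⟨w₂, ⟨w₁, h₁, h₁₂⟩, rfl⟩
      · simp [branchSet_of_mem e hv]
      · exact ((copyGraph_adj_inl_inr H X).2 h₂).symm

end ExtensionMinor

/-- There exists a positive integer `ℓ` such that the treewidth of
the extension graph `Γ(H,X)` is at most the treewidth of `F_ℓ(H,X)`; in fact any
`ℓ > |V(H)| + 1` works. -/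
theorem stmt6 {V : Type*} [Fintype V] (H : SimpleGraph V) (X : Set V) :
    ∀ ℓ : ℕ, Fintype.card V + 1 < ℓ →
      treewidth (extGraph H X) ≤ treewidth (copyGraph H X ℓ) := by
  intro ℓ hℓ
  have hcard : Fintype.card (Option V) ≤ Fintype.card (Fin ℓ) := by
    rw [Fintype.card_option, Fintype.card_fin]
    omega
  obtain ⟨e⟩ := Function.Embedding.nonempty_of_card_le hcard
  exact treewidth_le_of_minorModel (extGraphMinorModel e)
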